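/- Let P₁ and P₀ be Markov transition kernels on (Z, F) such that for every r ∈ (0,1) the mixture P_r = r P₁ + (1−r) P₀ is reversible with respect to ω. If ‖P_{r₀}‖_ω < 1 for some r₀ ∈ (0,1), then ‖P_r‖_ω < 1 for every r ∈ (0,1). -/

import Mathlib

/-!
Reversibility makes `ω` invariant under every `P_s`, `s ∈ (0,1)`, so by Jensen each `P_s` is a
contraction of `L²(ω)`. Given `r`, continue the segment from `r₀` through `r` a little to a point
`s ∈ (0,1)`: then `r = t r₀ + (1 - t) s` with `t ∈ (0,1)`, and `P_r = t P_{r₀} + (1 - t) P_s` as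
kernels. By the triangle inequality `‖P_r f‖ ≤ t ‖P_{r₀}‖_ω + (1 - t)` for every unit `f`, and the
right-hand side is `< 1`.
-/

open MeasureTheory

/-- The operator norm on `L²₀(ω)` of a transition kernel `P` (viewed as a map
`Z → Measure Z`). -/
noncomputable def kernelNorm {Z : Type*} [MeasurableSpace Z]
    (P : Z → Measure Z) (ω : Measure Z) : ℝ :=
  sSup {t : ℝ | ∃ f : Z → ℝ,
    MemLp f 2 ω ∧ (∫ z, f z ∂ω) = 0 ∧ (∫ z, (f z)^2 ∂ω) = 1 ∧
    t = Real.sqrt (∫ z, (∫ x, f x ∂(P z))^2 ∂ω)}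

/-- The mixture kernel `P_r = r P₁ + (1-r) P₀`, as a map `Z → Measure Z`. -/
noncomputable def mixKernel {Z : Type*} [MeasurableSpace Z]
    (P₁ P₀ : ProbabilityTheory.Kernel Z Z) (r : ℝ) : Z → Measure Z :=
  fun z => ENNReal.ofReal r • P₁ z + ENNReal.ofReal (1 - r) • P₀ z

open ProbabilityTheory Set
open scoped ENNReal

lemma sqrt_integral_sq_eq_norm_toLp {α : Type*} {mα : MeasurableSpace α} {μ : Measure α}
    {h : α → ℝ} (hh : MemLp h 2 μ) : √(∫ a, h a ^ 2 ∂μ) = ‖hh.toLp h‖ := by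
  rw [Lp.norm_toLp, hh.eLpNorm_eq_integral_rpow_norm two_ne_zero ENNReal.ofNat_ne_top,
    ENNReal.toReal_ofReal (by positivity), Real.sqrt_eq_rpow]
  simp

lemma exists_eq_convex_combination_of_mem_Ioo {r r₀ : ℝ} (hr : r ∈ Ioo (0 : ℝ) 1)
    (hr₀ : r₀ ∈ Ioo (0 : ℝ) 1) : ∃ s ∈ Ioo (0 : ℝ) 1, ∃ t ∈ Ioo (0 : ℝ) 1,
      r = t * r₀ + (1 - t) * s := by
  obtain ⟨hr0, hr1⟩ := hr
  obtain ⟨hr₀0, hr₀1⟩ := hr₀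
  set ε := r * (1 - r)
  have hε : 0 < ε := by positivity
  refine ⟨r + ε * (r - r₀), ⟨by nlinarith, by nlinarith⟩, ε / (1 + ε),
    ⟨by positivity, (div_lt_one (by positivity)).mpr (by linarith)⟩, ?_⟩
  field_simp
  ring

namespace ProbabilityTheory.Kernel

section Invariant

variable {α : Type*} {mα : MeasurableSpace α} {κ : Kernel α α} {μ : Measure α}
  {E : Type*} [NormedAddCommGroup E]

lemma Invariant.ae_ae_of_ae (hκ : κ.Invariant μ) {p : α → Prop} (h : ∀ᵐ x ∂μ, p x) :
    ∀ᵐ a ∂μ, ∀ᵐ x ∂κ a, p x :=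
  Measure.ae_ae_of_ae_comp (by rwa [hκ.def])

lemma Invariant.integral_congr_ae [NormedSpace ℝ E] (hκ : κ.Invariant μ) {f g : α → E}
    (h : f =ᵐ[μ] g) :
    (fun a ↦ ∫ x, f x ∂κ a) =ᵐ[μ] fun a ↦ ∫ x, g x ∂κ a :=
  (hκ.ae_ae_of_ae h).mono fun _ ↦ MeasureTheory.integral_congr_ae

lemma Invariant.aestronglyMeasurable_integral [NormedSpace ℝ E] (hκ : κ.Invariant μ)
    {f : α → E} (hf : AEStronglyMeasurable f μ) :
    AEStronglyMeasurable (fun a ↦ ∫ x, f x ∂κ a) μ :=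
  hf.stronglyMeasurable_mk.integral_kernel.aestronglyMeasurable.congr
    (hκ.integral_congr_ae hf.ae_eq_mk).symm

lemma Invariant.ae_integrable (hκ : κ.Invariant μ) {f : α → E} (hf : Integrable f μ) :
    ∀ᵐ a ∂μ, Integrable f (κ a) :=
  Measure.ae_integrable_of_integrable_comp (by rwa [hκ.def])

lemma Invariant.lintegral_lintegral (hκ : κ.Invariant μ) {g : α → ℝ≥0∞}
    (hg : AEMeasurable g μ) : ∫⁻ a, ∫⁻ x, g x ∂κ a ∂μ = ∫⁻ x, g x ∂μ := by
  rw [← Measure.lintegral_bind κ.aemeasurable (by rwa [hκ.def]), hκ.def]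

lemma Invariant.eLpNorm_integral_le [NormedSpace ℝ E] [IsMarkovKernel κ] (hκ : κ.Invariant μ)
    {p : ℝ≥0∞} (hp1 : 1 ≤ p) (hp : p ≠ ∞) {f : α → E} (hf : AEStronglyMeasurable f μ) :
    eLpNorm (fun a ↦ ∫ x, f x ∂κ a) p μ ≤ eLpNorm f p μ := by
  have hq : 1 ≤ p.toReal := by simpa using ENNReal.toReal_mono hp hp1
  rw [eLpNorm_congr_ae (hκ.integral_congr_ae hf.ae_eq_mk), eLpNorm_congr_ae hf.ae_eq_mk,
    eLpNorm_eq_eLpNorm' (by positivity) hp, eLpNorm_eq_eLpNorm' (by positivity) hp]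
  set q := p.toReal
  set g := hf.mk f
  have hg : StronglyMeasurable g := hf.stronglyMeasurable_mk
  have hjensen (a : α) : ‖∫ x, g x ∂κ a‖ₑ ^ q ≤ ∫⁻ x, ‖g x‖ₑ ^ q ∂κ a := by
    rw [lintegral_rpow_enorm_eq_rpow_eLpNorm' (by positivity)]
    gcongr
    calc ‖∫ x, g x ∂κ a‖ₑ ≤ eLpNorm' g 1 (κ a) := by
          simpa [eLpNorm'_eq_lintegral_enorm] using enorm_integral_le_lintegral_enorm g
      _ ≤ eLpNorm' g q (κ a) :=
          eLpNorm'_le_eLpNorm'_of_exponent_le one_pos hq _ hg.aestronglyMeasurable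
  simp only [eLpNorm'_eq_lintegral_enorm]
  gcongr ?_ ^ _
  calc ∫⁻ a, ‖∫ x, g x ∂κ a‖ₑ ^ q ∂μ ≤ ∫⁻ a, ∫⁻ x, ‖g x‖ₑ ^ q ∂κ a ∂μ := lintegral_mono hjensen
    _ = ∫⁻ x, ‖g x‖ₑ ^ q ∂μ := hκ.lintegral_lintegral (hg.enorm.pow_const q).aemeasurable

lemma Invariant.memLp_integral [NormedSpace ℝ E] [IsMarkovKernel κ] (hκ : κ.Invariant μ)
    {p : ℝ≥0∞} (hp1 : 1 ≤ p) (hp : p ≠ ∞) {f : α → E} (hf : MemLp f p μ) :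
    MemLp (fun a ↦ ∫ x, f x ∂κ a) p μ :=
  ⟨hκ.aestronglyMeasurable_integral hf.1, (hκ.eLpNorm_integral_le hp1 hp hf.1).trans_lt hf.2⟩

lemma Invariant.sqrt_integral_sq_integral_le [IsMarkovKernel κ] (hκ : κ.Invariant μ)
    {f : α → ℝ} (hf : MemLp f 2 μ) :
    √(∫ a, (∫ x, f x ∂κ a) ^ 2 ∂μ) ≤ √(∫ a, f a ^ 2 ∂μ) := by
  have hκf := hκ.memLp_integral one_le_two ENNReal.ofNat_ne_top hf
  rw [sqrt_integral_sq_eq_norm_toLp hκf, sqrt_integral_sq_eq_norm_toLp hf, Lp.norm_toLp,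
    Lp.norm_toLp]
  exact ENNReal.toReal_mono hf.2.ne
    (hκ.eLpNorm_integral_le one_le_two ENNReal.ofNat_ne_top hf.1)

end Invariant

section Mix

variable {α β : Type*} {mα : MeasurableSpace α} {mβ : MeasurableSpace β}
  {κ η : Kernel α β} {r : ℝ} {E : Type*} [NormedAddCommGroup E] [NormedSpace ℝ E]

noncomputable def mix (κ η : Kernel α β) (r : ℝ) : Kernel α β where
  toFun a := ENNReal.ofReal r • κ a + ENNReal.ofReal (1 - r) • η a
  measurable' := by
    refine Measure.measurable_of_measurable_coe _ fun s hs ↦ ?_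
    simp only [Measure.coe_add, Measure.coe_smul, Pi.add_apply, Pi.smul_apply, smul_eq_mul]
    exact ((κ.measurable_coe hs).const_mul _).add ((η.measurable_coe hs).const_mul _)

lemma mix_apply (κ η : Kernel α β) (r : ℝ) (a : α) :
    κ.mix η r a = ENNReal.ofReal r • κ a + ENNReal.ofReal (1 - r) • η a := rfl

lemma isMarkovKernel_mix [IsMarkovKernel κ] [IsMarkovKernel η] (hr0 : 0 ≤ r) (hr1 : r ≤ 1) :
    IsMarkovKernel (κ.mix η r) :=
  ⟨fun a ↦ ⟨by simp [mix_apply, ← ENNReal.ofReal_add hr0 (sub_nonneg.mpr hr1)]⟩⟩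

lemma integral_mix_apply {f : β → E} {a : α} (hr0 : 0 ≤ r) (hr1 : r ≤ 1)
    (hκ : Integrable f (κ a)) (hη : Integrable f (η a)) :
    ∫ x, f x ∂(κ.mix η r a) = r • ∫ x, f x ∂(κ a) + (1 - r) • ∫ x, f x ∂(η a) := by
  rw [mix_apply, integral_add_measure, integral_smul_measure, integral_smul_measure,
    ENNReal.toReal_ofReal hr0, ENNReal.toReal_ofReal (sub_nonneg.mpr hr1)]
  · exact hκ.smul_measure ENNReal.ofReal_ne_top
  · exact hη.smul_measure ENNReal.ofReal_ne_top

lemma mix_mix {r₀ s t : ℝ} (hr₀ : r₀ ∈ Icc (0 : ℝ) 1) (hs : s ∈ Icc (0 : ℝ) 1)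
    (ht : t ∈ Icc (0 : ℝ) 1) :
    (κ.mix η r₀).mix (κ.mix η s) t = κ.mix η (t * r₀ + (1 - t) * s) := by
  obtain ⟨hr₀0, hr₀1⟩ := hr₀
  obtain ⟨hs0, hs1⟩ := hs
  obtain ⟨ht0, ht1⟩ := ht
  ext1 a
  simp only [mix_apply, smul_add, smul_smul, ← ENNReal.ofReal_mul ht0,
    ← ENNReal.ofReal_mul (sub_nonneg.2 ht1)]
  rw [add_add_add_comm, ← add_smul, ← add_smul,
    ← ENNReal.ofReal_add (by positivity) (mul_nonneg (sub_nonneg.2 ht1) hs0),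
    ← ENNReal.ofReal_add (mul_nonneg ht0 (sub_nonneg.2 hr₀1))
      (mul_nonneg (sub_nonneg.2 ht1) (sub_nonneg.2 hs1))]
  congr 3
  ring

end Mix

lemma sqrt_integral_sq_integral_mix_le {α : Type*} {mα : MeasurableSpace α} {μ : Measure α}
    [IsFiniteMeasure μ] {κ η : Kernel α α} [IsMarkovKernel κ] [IsMarkovKernel η]
    (hκ : κ.Invariant μ) (hη : η.Invariant μ) {t : ℝ} (ht : t ∈ Icc (0 : ℝ) 1) {f : α → ℝ}
    (hf : MemLp f 2 μ) :
    √(∫ a, (∫ x, f x ∂(κ.mix η t a)) ^ 2 ∂μ)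
      ≤ t * √(∫ a, (∫ x, f x ∂κ a) ^ 2 ∂μ) + (1 - t) * √(∫ a, (∫ x, f x ∂η a) ^ 2 ∂μ) := by
  obtain ⟨ht0, ht1⟩ := ht
  have hκf := hκ.memLp_integral one_le_two ENNReal.ofNat_ne_top hf
  have hηf := hη.memLp_integral one_le_two ENNReal.ofNat_ne_top hf
  have hmix : (fun a ↦ ∫ x, f x ∂(κ.mix η t a))
      =ᵐ[μ] t • (fun a ↦ ∫ x, f x ∂κ a) + (1 - t) • fun a ↦ ∫ x, f x ∂η a := by
    have hfint := hf.integrable one_le_two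
    filter_upwards [hκ.ae_integrable hfint, hη.ae_integrable hfint] with a hκa hηa
    exact integral_mix_apply ht0 ht1 hκa hηa
  calc √(∫ a, (∫ x, f x ∂(κ.mix η t a)) ^ 2 ∂μ)
      = ‖t • hκf.toLp _ + (1 - t) • hηf.toLp _‖ := by
        rw [← MemLp.toLp_const_smul, ← MemLp.toLp_const_smul, ← MemLp.toLp_add,
          ← sqrt_integral_sq_eq_norm_toLp]
        exact congrArg _ (integral_congr_ae (hmix.mono fun a ha ↦ by simp only [ha]))
    _ ≤ t * ‖hκf.toLp _‖ + (1 - t) * ‖hηf.toLp _‖ := by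
        refine (norm_add_le _ _).trans_eq ?_
        rw [norm_smul, norm_smul, Real.norm_of_nonneg ht0, Real.norm_of_nonneg (sub_nonneg.2 ht1)]
    _ = t * √(∫ a, (∫ x, f x ∂κ a) ^ 2 ∂μ) + (1 - t) * √(∫ a, (∫ x, f x ∂η a) ^ 2 ∂μ) := by
        rw [sqrt_integral_sq_eq_norm_toLp hκf, sqrt_integral_sq_eq_norm_toLp hηf]

end ProbabilityTheory.Kernel

section KernelNorm

variable {Z : Type*} [MeasurableSpace Z] {ω : Measure Z}

lemma mixKernel_eq_mix (P₁ P₀ : Kernel Z Z) (r : ℝ) : mixKernel P₁ P₀ r = ⇑(P₁.mix P₀ r) := rfl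

lemma kernelNorm_nonneg (P : Z → Measure Z) (ω : Measure Z) : 0 ≤ kernelNorm P ω :=
  Real.sSup_nonneg (by rintro _ ⟨f, -, -, -, rfl⟩; positivity)

lemma kernelNorm_le {P : Z → Measure Z} {b : ℝ} (hb : 0 ≤ b)
    (h : ∀ f : Z → ℝ, MemLp f 2 ω → ∫ z, f z ∂ω = 0 → ∫ z, f z ^ 2 ∂ω = 1 →
      √(∫ z, (∫ x, f x ∂(P z)) ^ 2 ∂ω) ≤ b) :
    kernelNorm P ω ≤ b :=
  Real.sSup_le (by rintro _ ⟨f, hf, hf0, hf1, rfl⟩; exact h f hf hf0 hf1) hb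

lemma ProbabilityTheory.Kernel.Invariant.sqrt_integral_sq_integral_le_kernelNorm
    {κ : Kernel Z Z} [IsMarkovKernel κ] (hκ : κ.Invariant ω) {f : Z → ℝ} (hf : MemLp f 2 ω)
    (hf0 : ∫ z, f z ∂ω = 0) (hf1 : ∫ z, f z ^ 2 ∂ω = 1) :
    √(∫ z, (∫ x, f x ∂κ z) ^ 2 ∂ω) ≤ kernelNorm κ ω := by
  refine le_csSup ⟨1, ?_⟩ ⟨f, hf, hf0, hf1, rfl⟩
  rintro _ ⟨g, hg, -, hg1, rfl⟩
  simpa [hg1] using hκ.sqrt_integral_sq_integral_le hg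

end KernelNorm

/-- If every mixture `P_r = rP₁ + (1-r)P₀`, `r ∈ (0,1)`, is reversible with respect
to `ω`, and `‖P_{r₀}‖_ω < 1` for some `r₀ ∈ (0,1)`, then `‖P_r‖_ω < 1` for every
`r ∈ (0,1)`. -/
theorem stmt_4 {Z : Type*} [MeasurableSpace Z]
    (ω : Measure Z) [IsProbabilityMeasure ω]
    (P₁ P₀ : ProbabilityTheory.Kernel Z Z)
    [ProbabilityTheory.IsMarkovKernel P₁] [ProbabilityTheory.IsMarkovKernel P₀]
    (hrev : ∀ r : ℝ, 0 < r → r < 1 → ∀ A B : Set Z, MeasurableSet A →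
      MeasurableSet B →
      ∫⁻ z in A, mixKernel P₁ P₀ r z B ∂ω = ∫⁻ z in B, mixKernel P₁ P₀ r z A ∂ω)
    (r₀ : ℝ) (hr₀ : 0 < r₀) (hr₀1 : r₀ < 1)
    (h₀ : kernelNorm (mixKernel P₁ P₀ r₀) ω < 1) :
    ∀ r : ℝ, 0 < r → r < 1 → kernelNorm (mixKernel P₁ P₀ r) ω < 1 := by
  simp only [mixKernel_eq_mix] at hrev h₀ ⊢
  have hmarkov (s : ℝ) (hs : s ∈ Ioo (0 : ℝ) 1) : IsMarkovKernel (P₁.mix P₀ s) :=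
    Kernel.isMarkovKernel_mix hs.1.le hs.2.le
  have hinv (s : ℝ) (hs : s ∈ Ioo (0 : ℝ) 1) : (P₁.mix P₀ s).Invariant ω :=
    have := hmarkov s hs
    Kernel.IsReversible.invariant fun A B hA hB ↦ hrev s hs.1 hs.2 A B hA hB
  intro r hr hr1
  obtain ⟨s, hs, t, ⟨ht0, ht1⟩, rfl⟩ :=
    exists_eq_convex_combination_of_mem_Ioo ⟨hr, hr1⟩ ⟨hr₀, hr₀1⟩
  have := hmarkov r₀ ⟨hr₀, hr₀1⟩
  have := hmarkov s hs
  rw [← Kernel.mix_mix ⟨hr₀.le, hr₀1.le⟩ ⟨hs.1.le, hs.2.le⟩ ⟨ht0.le, ht1.le⟩]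
  calc kernelNorm ((P₁.mix P₀ r₀).mix (P₁.mix P₀ s) t) ω
      ≤ t * kernelNorm (P₁.mix P₀ r₀) ω + (1 - t) * 1 := by
        refine kernelNorm_le (by nlinarith [kernelNorm_nonneg (P₁.mix P₀ r₀) ω])
          fun f hf hf0 hf1 ↦ ?_
        have hr₀f := (hinv r₀ ⟨hr₀, hr₀1⟩).sqrt_integral_sq_integral_le_kernelNorm hf hf0 hf1
        have hsf : √(∫ z, (∫ x, f x ∂(P₁.mix P₀ s z)) ^ 2 ∂ω) ≤ 1 := by
          simpa [hf1] using (hinv s hs).sqrt_integral_sq_integral_le hf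
        refine (Kernel.sqrt_integral_sq_integral_mix_le (hinv r₀ ⟨hr₀, hr₀1⟩) (hinv s hs)
          ⟨ht0.le, ht1.le⟩ hf).trans ?_
        gcongr
    _ < 1 := by nlinarith
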